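/- Let X and Y be sets and R ⊆ X × Y a relation whose indicator χ_R has the double limit property. Let 𝒰_X and 𝒰_Y be the sets of ultrafilters on C_X(R) and C_Y(R) respectively. Then the function χ : 𝒰_X × 𝒰_Y → ℝ given by χ(U,V) = 1 if d_U ∈ V and χ(U,V) = 0 otherwise has the double limit property. -/

import Mathlib

/-!
Extend the ultrafilters `U` on `C_X(R)` and `V` on `C_Y(R)` to ultrafilters `P` on `X` and `Q`
on `Y`; then `d_U = d_P`. The double limit property of `χ_R` forces `d_P ∈ Q ↔ e_Q ∈ P`: otherwise
one picks, alternately from `P`-large and `Q`-large sets, a half graph `(a_k, b_l) ∈ R ↔ l < k`,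
whose iterated limits are `0` and `1`. So `[d_P ∈ Q]` is continuous in each variable on
`βX × βY`, and a separately continuous function on a product of compact spaces has the double
limit property, both iterated limits being its value at the ultrafilter limits of the two
sequences. Since `χ(U, V) = 0` whenever `d_U ∉ C_Y(R)`, the first factor carries a Boolean tag.
-/


open Filter Topology

/-- A Boolean algebra of sets on `X`: contains `∅` and `univ`, closed under
finite unions, finite intersections and complements. -/
def IsBoolAlg {X : Type*} (C : Set (Set X)) : Prop :=
  ∅ ∈ C ∧ Set.univ ∈ C ∧
    (∀ A ∈ C, ∀ B ∈ C, A ∪ B ∈ C) ∧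
    (∀ A ∈ C, ∀ B ∈ C, A ∩ B ∈ C) ∧
    (∀ A ∈ C, Aᶜ ∈ C)

/-- An ultrafilter on a Boolean algebra of sets `C`. -/
def IsUltraOn {X : Type*} (C : Set (Set X)) (U : Set (Set X)) : Prop :=
  U ⊆ C ∧ ∅ ∉ U ∧ Set.univ ∈ U ∧
    (∀ A ∈ U, ∀ B ∈ U, A ∩ B ∈ U) ∧
    (∀ A ∈ U, ∀ B ∈ C, A ⊆ B → B ∈ U) ∧
    (∀ A ∈ C, A ∈ U ∨ Aᶜ ∈ U)

/-- A finitely additive probability measure on `C`. -/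
def IsFAP {X : Type*} (C : Set (Set X)) (μ : Set X → ℝ) : Prop :=
  (∀ A ∈ C, 0 ≤ μ A) ∧ μ Set.univ = 1 ∧
    (∀ A ∈ C, ∀ B ∈ C, A ∩ B = ∅ → μ (A ∪ B) = μ A + μ B)

/-- `μ` is strongly continuous on `C`: for every `ε > 0` there is a finite
partition of `X` into members of `C`, each of measure `< ε`. -/
def StrongCont {X : Type*} (C : Set (Set X)) (μ : Set X → ℝ) : Prop :=
  ∀ ε : ℝ, 0 < ε → ∃ (n : ℕ) (F : Fin n → Set X),
    (∀ i, F i ∈ C) ∧ (⋃ i, F i) = Set.univ ∧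
    (∀ i j, i ≠ j → F i ∩ F j = ∅) ∧ ∀ i, μ (F i) < ε

/-- `μ` is `{0,1}`-valued on `C`. -/
def ZeroOneValued {X : Type*} (C : Set (Set X)) (μ : Set X → ℝ) : Prop :=
  ∀ A ∈ C, μ A = 0 ∨ μ A = 1

/-- A 2-tree in `C`: an injective map from finite binary strings into `C` such
that children are strictly below their parent and the two children of a node
are disjoint. -/
def IsTwoTree {X : Type*} (C : Set (Set X)) (t : List Bool → Set X) : Prop :=
  Function.Injective t ∧ (∀ s, t s ∈ C) ∧
    (∀ s b, t (s ++ [b]) ⊂ t s) ∧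
    ∀ s, t (s ++ [false]) ∩ t (s ++ [true]) = ∅

/-- The double limit property for `f : A × B → ℝ`: whenever both iterated
limits along sequences exist, they are equal. -/
def DLP {A B : Type*} (f : A → B → ℝ) : Prop :=
  ∀ (a : ℕ → A) (b : ℕ → B) (u v : ℕ → ℝ) (L L' : ℝ),
    (∀ i, Tendsto (fun j => f (a i) (b j)) atTop (𝓝 (u i))) →
    Tendsto u atTop (𝓝 L) →
    (∀ j, Tendsto (fun i => f (a i) (b j)) atTop (𝓝 (v j))) →
    Tendsto v atTop (𝓝 L') → L = L'

-- The indicator `χ_R` of a relation `R ⊆ X × Y`.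
open Classical in
noncomputable def chi {X Y : Type*} (R : Set (X × Y)) : X → Y → ℝ :=
  fun a b => if (a, b) ∈ R then 1 else 0

/-- The Boolean algebra of sets generated by `S`. -/
def genAlg {X : Type*} (S : Set (Set X)) : Set (Set X) :=
  ⋂₀ {C : Set (Set X) | IsBoolAlg C ∧ S ⊆ C}

/-- `C_X(R)`: the Boolean algebra on `X` generated by the columns of `R`. -/
def colAlg {X Y : Type*} (R : Set (X × Y)) : Set (Set X) :=
  genAlg {A | ∃ b : Y, A = {x : X | (x, b) ∈ R}}

/-- `C_Y(R)`: the Boolean algebra on `Y` generated by the rows of `R`. -/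
def rowAlg {X Y : Type*} (R : Set (X × Y)) : Set (Set Y) :=
  genAlg {B | ∃ a : X, B = {y : Y | (a, y) ∈ R}}

/-- `d_U = {b ∈ Y : {x : (x,b) ∈ R} ∈ U}`. -/
def dSet {X Y : Type*} (R : Set (X × Y)) (U : Set (Set X)) : Set Y :=
  {b : Y | {x : X | (x, b) ∈ R} ∈ U}

/-- `e_V = {a ∈ X : {y : (a,y) ∈ R} ∈ V}`. -/
def eSet {X Y : Type*} (R : Set (X × Y)) (V : Set (Set Y)) : Set X :=
  {a : X | {y : Y | (a, y) ∈ R} ∈ V}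

/-- Membership in `conv_δ(Z)`: a nonnegative, countably supported weight
function summing to `1`. -/
def IsConvDelta {Z : Type*} (p : Z → ℝ) : Prop :=
  (∀ z, 0 ≤ p z) ∧ (Function.support p).Countable ∧ HasSum p 1

/-- `f_c(p, q) = ∑_{(x,y)} p(x) q(y) f(x,y)`. -/
noncomputable def fc {X Y : Type*} (f : X → Y → ℝ) (p : X → ℝ) (q : Y → ℝ) : ℝ :=
  ∑' z : X × Y, p z.1 * q z.2 * f z.1 z.2

/-- The `k`-order property for a relation `R ⊆ X × Y`. -/
def HasKOrderProp {X Y : Type*} (R : Set (X × Y)) (k : ℕ) : Prop :=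
  ∃ (a : Fin k → X) (b : Fin k → Y), ∀ i j, (a i, b j) ∈ R ↔ i < j

-- The pairing `χ(U, V)` on ultrafilters: `1` if `d_U ∈ V`, else `0`.
open Classical in
noncomputable def chiU {X Y : Type*} (R : Set (X × Y))
    (U : {U : Set (Set X) // IsUltraOn (colAlg R) U})
    (V : {V : Set (Set Y) // IsUltraOn (rowAlg R) V}) : ℝ :=
  if dSet R U.1 ∈ V.1 then 1 else 0

/-- `𝓕` shatters the finite set `S`. -/
def ShattersSet {X : Type*} (F : Set (Set X)) (S : Finset X) : Prop :=
  ∀ T ⊆ S, ∃ A ∈ F, A ∩ ↑S = (↑T : Set X)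

/-- An atomic probability measure on `X`. -/
def IsAtomicMeasure {X : Type*} (μ : Set X → ℝ) : Prop :=
  ∃ (I : Set ℕ) (x : ℕ → X) (r : ℕ → ℝ),
    (∀ i ∈ I, 0 ≤ r i) ∧ HasSum (fun i : I => r (i : ℕ)) 1 ∧
    ∀ A : Set X, μ A = ∑' i : {i : ℕ // i ∈ I ∧ x i ∈ A}, r (i : ℕ)

section UltrafilterPairing

variable {X Y : Type*}

theorem DLP.comp {A B A' B' : Type*} {g : A → B → ℝ} (hg : DLP g) (α : A' → A) (β : B' → B) :
    DLP fun a b => g (α a) (β b) :=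
  fun a b => hg (α ∘ a) (β ∘ b)

theorem DLP.flip {A B : Type*} {g : A → B → ℝ} (hg : DLP g) : DLP (flip g) :=
  fun a b u v L L' hu huL hv hvL => (hg b a v u L' L hv hvL hu huL).symm

theorem dlp_of_separatelyContinuous {K L : Type*} [TopologicalSpace K] [CompactSpace K]
    [TopologicalSpace L] [CompactSpace L] {g : K → L → ℝ}
    (hK : ∀ l, Continuous fun k => g k l) (hL : ∀ k, Continuous (g k)) : DLP g := by
  intro a b u v L₁ L₂ hu huL hv hvL
  set W : Ultrafilter ℕ := Ultrafilter.of atTop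
  have hW : (W : Filter ℕ) ≤ atTop := Ultrafilter.of_le atTop
  have ha : Tendsto a W (𝓝 (W.map a).lim) := (W.map a).le_nhds_lim
  have hb : Tendsto b W (𝓝 (W.map b).lim) := (W.map b).le_nhds_lim
  have hu' : u = fun i => g (a i) (W.map b).lim :=
    funext fun i => tendsto_nhds_unique ((hu i).mono_left hW) (((hL _).tendsto _).comp hb)
  have hv' : v = fun j => g (W.map a).lim (b j) :=
    funext fun j => tendsto_nhds_unique ((hv j).mono_left hW) (((hK _).tendsto _).comp ha)
  subst hu' hv'
  exact (tendsto_nhds_unique (huL.mono_left hW) (((hK _).tendsto _).comp ha)).trans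
    (tendsto_nhds_unique (hvL.mono_left hW) (((hL _).tendsto _).comp hb)).symm

theorem continuous_ite_of_isClopen {T : Type*} [TopologicalSpace T] {p : T → Prop}
    [DecidablePred p] (hp : IsClopen {x | p x}) : Continuous fun x => if p x then (1 : ℝ) else 0 :=
  continuous_const.if (by simp [hp.frontier_eq]) continuous_const

theorem IsUltraOn.exists_ultrafilter_mem_iff {C U : Set (Set X)} (hU : IsUltraOn C U) :
    ∃ P : Ultrafilter X, ∀ A ∈ C, A ∈ U ↔ A ∈ P := by
  obtain ⟨-, hempty, huniv, hinter, -, hdec⟩ := hU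
  let B : FilterBasis X :=
    { sets := U
      nonempty := ⟨_, huniv⟩
      inter_sets := fun hA hB => ⟨_, hinter _ hA _ hB, subset_rfl⟩ }
  have : B.filter.NeBot := forall_mem_nonempty_iff_neBot.1 fun s hs => by
    obtain ⟨t, htU, hts⟩ := B.mem_filter_iff.1 hs
    exact (Set.nonempty_iff_ne_empty.2 fun h => hempty (h ▸ htU)).mono hts
  have hle : ∀ A ∈ U, A ∈ Ultrafilter.of B.filter :=
    fun A hA => Ultrafilter.of_le B.filter (B.mem_filter_of_mem hA)
  refine ⟨Ultrafilter.of B.filter, fun A hA => ⟨hle A, fun hAP => ?_⟩⟩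
  exact (hdec A hA).resolve_right fun hAc => Ultrafilter.compl_mem_iff_notMem.1 (hle _ hAc) hAP

section Symmetry

variable {R : Set (X × Y)}

theorem not_dlp_chi_of_halfGraph {a : ℕ → X} {b : ℕ → Y} (hab : ∀ k l, (a k, b l) ∈ R ↔ l < k) :
    ¬ DLP (chi R) := by
  intro h
  refine zero_ne_one (h a b (fun _ => 0) (fun _ => 1) 0 1 (fun k => ?_) tendsto_const_nhds
    (fun l => ?_) tendsto_const_nhds)
  · refine tendsto_const_nhds.congr' ?_
    filter_upwards [eventually_ge_atTop k] with l hl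
    simp [chi, hab, hl.not_gt]
  · refine tendsto_const_nhds.congr' ?_
    filter_upwards [eventually_gt_atTop l] with k hk
    simp [chi, hab, hk]

theorem exists_halfGraph {P : Ultrafilter X} {Q : Ultrafilter Y} (hd : dSet R P.sets ∈ Q)
    (he : eSet R Q.sets ∉ P) : ∃ (a : ℕ → X) (b : ℕ → Y), ∀ k l, (a k, b l) ∈ R ↔ l < k := by
  have hstep : ∀ s : Finset (X × Y), (∀ z ∈ s, z.1 ∉ eSet R Q.sets ∧ z.2 ∈ dSet R P.sets) →
      ∃ w : X × Y, (w.1 ∉ eSet R Q.sets ∧ w.2 ∈ dSet R P.sets ∧ w ∉ R) ∧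
        ∀ z ∈ s, (w.1, z.2) ∈ R ∧ (z.1, w.2) ∉ R := by
    intro s hs
    obtain ⟨x, hxe, hx⟩ := Ultrafilter.nonempty_of_mem (inter_mem
      (Ultrafilter.compl_mem_iff_notMem.2 he) ((biInter_finset_mem s).2 fun z hz => (hs z hz).2))
    obtain ⟨y, ⟨hyd, hxy⟩, hy⟩ := Ultrafilter.nonempty_of_mem (inter_mem (inter_mem hd
      (Ultrafilter.compl_mem_iff_notMem.2 hxe)) ((biInter_finset_mem s).2 fun z hz =>
        Ultrafilter.compl_mem_iff_notMem.2 (hs z hz).1))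
    simp only [Set.mem_iInter] at hx hy
    exact ⟨(x, y), ⟨hxe, hyd, hxy⟩, fun z hz => ⟨hx z hz, hy z hz⟩⟩
  obtain ⟨f, hf, hrel⟩ := exists_seq_of_forall_finset_exists _ _
    fun s hs => hstep s fun z hz => ⟨(hs z hz).1, (hs z hz).2.1⟩
  refine ⟨fun k => (f k).1, fun l => (f l).2, fun k l => ?_⟩
  rcases lt_trichotomy l k with hlk | rfl | hkl
  · simpa [hlk] using (hrel l k hlk).1
  · simpa using (hf l).2.2
  · simpa [hkl.not_gt] using (hrel k l hkl).2

theorem eSet_mem_of_dSet_mem (h : DLP (chi R)) {P : Ultrafilter X} {Q : Ultrafilter Y}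
    (hd : dSet R P.sets ∈ Q) : eSet R Q.sets ∈ P := by
  by_contra he
  obtain ⟨a, b, hab⟩ := exists_halfGraph hd he
  exact not_dlp_chi_of_halfGraph hab h

theorem dSet_mem_iff_eSet_mem (h : DLP (chi R)) (P : Ultrafilter X) (Q : Ultrafilter Y) :
    dSet R P.sets ∈ Q ↔ eSet R Q.sets ∈ P :=
  ⟨eSet_mem_of_dSet_mem h,
    eSet_mem_of_dSet_mem (R := Prod.swap ⁻¹' R) (P := Q) (Q := P) h.flip⟩

end Symmetry

section TaggedPairing

variable (R : Set (X × Y))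

open Classical in
/-- The Boolean tag records whether `d_P` lies in `C_Y(R)`: an ultrafilter on the algebra
`C_Y(R)` cannot contain `d_P` otherwise. -/
noncomputable def taggedPairing (p : Ultrafilter X × Bool) (Q : Ultrafilter Y) : ℝ :=
  if p.2 ∧ dSet R p.1.sets ∈ Q then 1 else 0

theorem continuous_taggedPairing_right (p : Ultrafilter X × Bool) :
    Continuous (taggedPairing R p) := by
  classical
  refine continuous_ite_of_isClopen ?_
  rcases p with ⟨P, _ | _⟩
  · simpa using isClopen_empty
  · simpa using ⟨ultrafilter_isClosed_basic _, ultrafilter_isOpen_basic _⟩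

theorem continuous_taggedPairing_left {R : Set (X × Y)} (h : DLP (chi R)) (Q : Ultrafilter Y) :
    Continuous fun p => taggedPairing R p Q := by
  classical
  refine continuous_ite_of_isClopen ?_
  simp only [dSet_mem_iff_eSet_mem h, Set.ofPred_and]
  exact ((isClopen_discrete {true}).preimage continuous_snd).inter
    (IsClopen.preimage ⟨ultrafilter_isClosed_basic _, ultrafilter_isOpen_basic _⟩ continuous_fst)

open Classical in
theorem chiU_eq_taggedPairing {U : {U : Set (Set X) // IsUltraOn (colAlg R) U}}
    {V : {V : Set (Set Y) // IsUltraOn (rowAlg R) V}} {P : Ultrafilter X} {Q : Ultrafilter Y}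
    (hP : ∀ A ∈ colAlg R, A ∈ U.1 ↔ A ∈ P) (hQ : ∀ B ∈ rowAlg R, B ∈ V.1 ↔ B ∈ Q) :
    chiU R U V = taggedPairing R (P, decide (dSet R U.1 ∈ rowAlg R)) Q := by
  have hd : dSet R U.1 = dSet R P.sets :=
    Set.ext fun b => hP _ (Set.mem_sInter.2 fun _ hC => hC.2 ⟨b, rfl⟩)
  by_cases hrow : dSet R U.1 ∈ rowAlg R
  · simp [chiU, taggedPairing, hrow, hQ _ hrow, ← hd]
  · simp [chiU, taggedPairing, hrow, mt (fun h => V.2.1 h) hrow]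

end TaggedPairing

end UltrafilterPairing

/-- if the indicator of `R` has the double limit property, then so
does the pairing `χ(U, V)` on ultrafilters on `C_X(R)` and `C_Y(R)`. -/
theorem ultrafilter_pairing_dlp {X Y : Type*} (R : Set (X × Y))
    (h : DLP (chi R)) : DLP (chiU R) := by
  classical
  choose P hP using fun U : {U // IsUltraOn (colAlg R) U} => U.2.exists_ultrafilter_mem_iff
  choose Q hQ using fun V : {V // IsUltraOn (rowAlg R) V} => V.2.exists_ultrafilter_mem_iff
  have hchi : chiU R = fun U V => taggedPairing R (P U, decide (dSet R U.1 ∈ rowAlg R)) (Q V) :=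
    funext₂ fun U V => chiU_eq_taggedPairing R (hP U) (hQ V)
  rw [hchi]
  exact (dlp_of_separatelyContinuous (continuous_taggedPairing_left h)
    (continuous_taggedPairing_right R)).comp _ Q
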